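/- arXiv:1605.08348 — 3 statements merged into one kernel-verified Lean document; each statement's English description precedes it below -/
import Mathlib

section
/- Let H be a complex Hilbert space and let P, Q : H → H be orthogonal projections, i.e. continuous linear maps satisfying P∘P = P, Q∘Q = Q, and P, Q self-adjoint (⟪P x, y⟫ = ⟪x, P y⟫ and ⟪Q x, y⟫ = ⟪x, Q y⟫ for all x, y ∈ H). If ‖P − Q‖ ≤ 1/4 in operator norm, then ‖P − Q‖ ≤ 4·‖(1 − P)∘Q‖. -/
/-!
For idempotents `p, q` of a ring,
`p - q = (p - q)² (1 - q) - (p - q)² q + q p (1 - q) + (1 - q) p q`.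
Take `p = Q`, `q = P`. The factors `P` and `1 - P` have norm at most one, and the two
off-diagonal blocks `P Q (1 - P)`, `(1 - P) Q P` are bounded by `‖(1 - P) Q‖ = ‖Q (1 - P)‖`, so
`‖P - Q‖ ≤ 2 ‖P - Q‖² + 2 ‖(1 - P) Q‖`. When `‖P - Q‖ ≤ 1/4` the quadratic term is at most
`‖P - Q‖ / 2` and can be absorbed into the left-hand side.
-/

open scoped InnerProductSpace

theorem IsIdempotentElem.sub_eq_sq_mul_sub_add {R : Type*} [Ring R] {p q : R}
    (hp : IsIdempotentElem p) (hq : IsIdempotentElem q) :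
    p - q = (p - q) ^ 2 * (1 - q) - (p - q) ^ 2 * q + q * p * (1 - q) + (1 - q) * p * q := by
  simp only [sq, mul_sub, sub_mul, mul_one, one_mul, mul_assoc, hp.eq, hq.eq]
  abel

section

variable {𝕜 E F : Type*} [RCLike 𝕜] [NormedAddCommGroup E] [InnerProductSpace 𝕜 E]
  [NormedAddCommGroup F] [InnerProductSpace 𝕜 F]

theorem LinearMap.IsSymmetricProjection.one_sub {p : E →ₗ[𝕜] E} (hp : p.IsSymmetricProjection) :
    (1 - p).IsSymmetricProjection :=
  ⟨hp.isIdempotentElem.one_sub, IsSymmetric.one.sub hp.isSymmetric⟩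

namespace ContinuousLinearMap

theorem norm_le_norm_of_inner_map_eq {A : E →L[𝕜] F} {B : F →L[𝕜] E}
    (h : ∀ x y, ⟪A x, y⟫_𝕜 = ⟪x, B y⟫_𝕜) : ‖A‖ ≤ ‖B‖ :=
  opNorm_le_of_re_inner_le (norm_nonneg B) fun x y hx hy => calc
    RCLike.re ⟪A x, y⟫_𝕜 ≤ ‖⟪x, B y⟫_𝕜‖ := h x y ▸ RCLike.re_le_norm _
    _ ≤ ‖x‖ * ‖B y‖ := norm_inner_le_norm _ _
    _ ≤ ‖B‖ := by simpa [hx, hy] using B.le_opNorm y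

theorem norm_mul_comm_of_isSymmetric {S T : E →L[𝕜] E}
    (hS : (S : E →ₗ[𝕜] E).IsSymmetric) (hT : (T : E →ₗ[𝕜] E).IsSymmetric) :
    ‖S * T‖ = ‖T * S‖ :=
  le_antisymm (norm_le_norm_of_inner_map_eq fun _ _ => (hS _ _).trans (hT _ _))
    (norm_le_norm_of_inner_map_eq fun _ _ => (hT _ _).trans (hS _ _))

theorem norm_le_one_of_isSymmetricProjection {P : E →L[𝕜] E}
    (hP : (P : E →ₗ[𝕜] E).IsSymmetricProjection) : ‖P‖ ≤ 1 := by
  obtain ⟨K, _, hK⟩ := LinearMap.isSymmetricProjection_iff_eq_coe_starProjection.mp hP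
  rw [coe_inj.mp hK]
  exact K.starProjection_norm_le

theorem norm_sub_le_of_isSymmetricProjection {P Q : E →L[𝕜] E}
    (hP : (P : E →ₗ[𝕜] E).IsSymmetricProjection) (hQ : (Q : E →ₗ[𝕜] E).IsSymmetricProjection) :
    ‖Q - P‖ ≤ 2 * ‖Q - P‖ ^ 2 + 2 * ‖(1 - P) * Q‖ := by
  have hP₁ : ‖P‖ ≤ 1 := norm_le_one_of_isSymmetricProjection hP
  have hP₁' : ‖1 - P‖ ≤ 1 := norm_le_one_of_isSymmetricProjection (P := 1 - P) hP.one_sub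
  have hadj : ‖Q * (1 - P)‖ = ‖(1 - P) * Q‖ :=
    norm_mul_comm_of_isSymmetric hQ.isSymmetric hP.one_sub.isSymmetric
  have hPi : IsIdempotentElem P := isIdempotentElem_toLinearMap_iff.mp hP.isIdempotentElem
  have hQi : IsIdempotentElem Q := isIdempotentElem_toLinearMap_iff.mp hQ.isIdempotentElem
  calc ‖Q - P‖
      = ‖(Q - P) ^ 2 * (1 - P) - (Q - P) ^ 2 * P + P * (Q * (1 - P)) + (1 - P) * Q * P‖ := by
        rw [← mul_assoc P, ← hQi.sub_eq_sq_mul_sub_add hPi]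
    _ ≤ ‖(Q - P) ^ 2 * (1 - P)‖ + ‖(Q - P) ^ 2 * P‖ + ‖P * (Q * (1 - P))‖
          + ‖(1 - P) * Q * P‖ := by
        grw [norm_add_le, norm_add_le, norm_sub_le]
    _ ≤ ‖Q - P‖ ^ 2 * 1 + ‖Q - P‖ ^ 2 * 1 + 1 * ‖Q * (1 - P)‖ + ‖(1 - P) * Q‖ * 1 := by
        have hsq : ‖(Q - P) ^ 2‖ ≤ ‖Q - P‖ ^ 2 := norm_pow_le' _ two_pos
        gcongr ?_ + ?_ + ?_ + ?_
        exacts [norm_mul_le_of_le hsq hP₁', norm_mul_le_of_le hsq hP₁,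
          norm_mul_le_of_le hP₁ le_rfl, norm_mul_le_of_le le_rfl hP₁]
    _ = 2 * ‖Q - P‖ ^ 2 + 2 * ‖(1 - P) * Q‖ := by
        rw [hadj]
        ring

end ContinuousLinearMap

end

/-- Lemma 3.1: for orthogonal projections `P, Q` on a complex Hilbert space with
`‖P − Q‖ ≤ 1/4`, one has `‖P − Q‖ ≤ 4 ‖(1 − P) Q‖`. -/
theorem norm_proj_diff_le_four_mul {H : Type*} [NormedAddCommGroup H]
    [InnerProductSpace ℂ H] (P Q : H →L[ℂ] H)
    (hP : P ∘L P = P) (hQ : Q ∘L Q = Q)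
    (hPsa : ∀ x y : H, ⟪P x, y⟫_ℂ = ⟪x, P y⟫_ℂ)
    (hQsa : ∀ x y : H, ⟪Q x, y⟫_ℂ = ⟪x, Q y⟫_ℂ)
    (hnorm : ‖P - Q‖ ≤ 1 / 4) :
    ‖P - Q‖ ≤ 4 * ‖(1 - P) ∘L Q‖ := by
  have key := ContinuousLinearMap.norm_sub_le_of_isSymmetricProjection
    ⟨ContinuousLinearMap.isIdempotentElem_toLinearMap_iff.mpr hP, hPsa⟩
    ⟨ContinuousLinearMap.isIdempotentElem_toLinearMap_iff.mpr hQ, hQsa⟩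
  rw [norm_sub_rev Q P] at key
  change ‖P - Q‖ ≤ 4 * ‖(1 - P) * Q‖
  nlinarith [norm_nonneg (P - Q)]
end

section
/- Let H be a complex Hilbert space, let S, σ : H → H be continuous linear maps with S self-adjoint, S∘S = 1 (the identity), and S∘σ = −σ∘S, and let P : H → H be an orthogonal projection (continuous linear, idempotent, self-adjoint) whose range has finite dimension equal to 1 and which commutes with S: S∘P = P∘S. Then P∘σ∘P = 0. -/
/-!
Since `S` commutes with `P`, it preserves the line `range P`, so `S P = c P = P S` for a scalar
`c`. Then `c (P σ P) = P S σ P = -P σ S P = -c (P σ P)`, so `c (P σ P) = 0`, and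
`P σ P = S S P σ P = S (c (P σ P)) = 0`.
-/

open scoped InnerProductSpace
open Module

theorem LinearMap.exists_mul_eq_smul_of_commute_of_finrank_range_eq_one {K M : Type*} [Field K]
    [AddCommGroup M] [Module K M] {f g : M →ₗ[K] M} (hcomm : Commute f g)
    (hg : finrank K (range g) = 1) : ∃ c : K, f * g = c • g := by
  have hmaps : ∀ x ∈ range g, f x ∈ range g := by
    rintro _ ⟨y, rfl⟩
    exact ⟨f y, (LinearMap.congr_fun hcomm y).symm⟩
  obtain ⟨c, hc, -⟩ := (f.restrict hmaps).existsUnique_eq_smul_id_of_finrank_eq_one hg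
  refine ⟨c, LinearMap.ext fun x => ?_⟩
  simpa using congrArg Subtype.val (LinearMap.congr_fun hc ⟨g x, x, rfl⟩)

theorem mul_mul_eq_zero_of_anticommute_of_mul_eq_smul {K A : Type*} [CommSemiring K] [Ring A]
    [Algebra K A] [IsAddTorsionFree A] {s a p : A} {c : K} (hs : s * s = 1)
    (hanti : s * a = -(a * s)) (hcomm : Commute s p) (hsp : s * p = c • p) :
    p * a * p = 0 := by
  have hps : p * s = c • p := hcomm.eq ▸ hsp
  have hsym : c • (p * a * p) = -(c • (p * a * p)) := calc
    c • (p * a * p) = p * (s * a) * p := by rw [← mul_assoc, hps, smul_mul_assoc, smul_mul_assoc]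
    _ = -(p * a * (s * p)) := by rw [hanti]; noncomm_ring
    _ = -(c • (p * a * p)) := by rw [hsp, mul_smul_comm]
  calc p * a * p = s * (s * p * a * p) := by simp only [← mul_assoc, hs, one_mul]
    _ = 0 := by rw [hsp, smul_mul_assoc, smul_mul_assoc, self_eq_neg.mp hsym, mul_zero]

theorem rankOne_proj_conj_anticommuting_eq_zero_general {H : Type*} [NormedAddCommGroup H]
    [InnerProductSpace ℂ H] (S σ P : H →L[ℂ] H)
    (hS2 : S ∘L S = 1)
    (hanti : S ∘L σ = -(σ ∘L S))
    (hrank : Module.finrank ℂ (LinearMap.range (P : H →ₗ[ℂ] H)) = 1)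
    (hcomm : S ∘L P = P ∘L S) :
    P ∘L σ ∘L P = 0 := by
  obtain ⟨c, hc⟩ := LinearMap.exists_mul_eq_smul_of_commute_of_finrank_range_eq_one
    (f := (S : H →ₗ[ℂ] H)) (congrArg ContinuousLinearMap.toLinearMap hcomm) hrank
  have hSP : S * P = c • P := ContinuousLinearMap.coe_injective hc
  have : IsAddTorsionFree (H →L[ℂ] H) := .of_isTorsionFree ℂ _
  exact mul_mul_eq_zero_of_anticommute_of_mul_eq_smul hS2 hanti hcomm hSP

/-- Lemma 2.9 (abstract form): a rank-one orthogonal projection `P` commuting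
with a self-adjoint involution `S` that anticommutes with `σ` satisfies
`P σ P = 0`. -/
theorem rankOne_proj_conj_anticommuting_eq_zero {H : Type*} [NormedAddCommGroup H]
    [InnerProductSpace ℂ H] (S σ P : H →L[ℂ] H)
    (hSsa : ∀ x y : H, ⟪S x, y⟫_ℂ = ⟪x, S y⟫_ℂ)
    (hS2 : S ∘L S = 1)
    (hanti : S ∘L σ = -(σ ∘L S))
    (hP : P ∘L P = P)
    (hPsa : ∀ x y : H, ⟪P x, y⟫_ℂ = ⟪x, P y⟫_ℂ)
    (hrank : Module.finrank ℂ (LinearMap.range (P : H →ₗ[ℂ] H)) = 1)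
    (hcomm : S ∘L P = P ∘L S) :
    P ∘L σ ∘L P = 0 :=
  rankOne_proj_conj_anticommuting_eq_zero_general S σ P hS2 hanti hrank hcomm
end

section
/- Let κ, γ, g be real numbers with 0 < κ, 0 < γ < 1/2, and 0 < g < γ/4, and set ρₙ = κ·γⁿ for n ∈ ℕ. Let a : ℕ → ℝ be a sequence satisfying a₀ ≥ κ and, for every n ∈ ℕ, a_{n+1} ≥ min(aₙ, (1 − g)·ρ_{n+1}) − g·ρₙ. Then aₙ ≥ ρₙ/2 for every n ∈ ℕ. -/
/-! Once `aₙ ≥ ρₙ/2`, the second entry `(1 - g) ρₙ₊₁ < γ ρₙ < ρₙ/2` of the minimum is the smaller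
one, so `aₙ₊₁ ≥ (γ - g (1 + γ)) ρₙ`; and `g (1 + γ) < (γ/4)(3/2) < γ/2` leaves at least
`γ ρₙ / 2 = ρₙ₊₁ / 2`. -/

theorem half_mul_le_of_min_sub_le {ρ γ g x y : ℝ} (hρ : 0 ≤ ρ) (hg0 : 0 ≤ g) (hg : g ≤ γ / 4)
    (hγ : γ ≤ 1 / 2) (hx : ρ / 2 ≤ x) (hy : min x ((1 - g) * (γ * ρ)) - g * ρ ≤ y) :
    γ * ρ / 2 ≤ y := by
  have hγ0 : 0 ≤ γ := by linarith
  have hmin : (1 - g) * (γ * ρ) ≤ x := by nlinarith [mul_nonneg hg0 (mul_nonneg hγ0 hρ)]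
  rw [min_eq_right hmin] at hy
  have hcoef : g * (1 + γ) ≤ γ / 2 := by nlinarith
  nlinarith [mul_le_mul_of_nonneg_right hcoef hρ]

/-- Proposition 2.6 (gap induction): if `a 0 ≥ κ` and
`a (n+1) ≥ min (a n) ((1 − g) ρ_{n+1}) − g ρ n` with `ρ n = κ γ ^ n`,
`0 < γ < 1/2`, `0 < g < γ/4`, then `a n ≥ ρ n / 2` for all `n`. -/
theorem gap_induction (κ γ g : ℝ) (hκ : 0 < κ) (hγ0 : 0 < γ) (hγ : γ < 1 / 2)
    (hg0 : 0 < g) (hg : g < γ / 4) (a : ℕ → ℝ)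
    (h0 : a 0 ≥ κ)
    (hrec : ∀ n : ℕ, a (n + 1) ≥ min (a n) ((1 - g) * (κ * γ ^ (n + 1))) - g * (κ * γ ^ n)) :
    ∀ n : ℕ, a n ≥ κ * γ ^ n / 2 := by
  intro n
  induction n with
  | zero => simp only [pow_zero, mul_one]; linarith
  | succ n ih =>
    have hρ : κ * γ ^ (n + 1) = γ * (κ * γ ^ n) := by ring
    have step := hrec n
    rw [hρ] at step ⊢
    exact half_mul_le_of_min_sub_le (by positivity) hg0.le hg.le hγ.le ih step
end
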